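/- In the differential polynomial algebra k{x,y} with at least two commuting derivations δ_1, δ_2, the element x^{δ_1 δ_1} − y^{δ_1 δ_2} does not belong to the differential subalgebra generated by x^{δ_1 δ_2} − y^{δ_2 δ_2}, and symmetrically x^{δ_1 δ_2} − y^{δ_2 δ_2} does not belong to the differential subalgebra generated by x^{δ_1 δ_1} − y^{δ_1 δ_2}. (Indeed, every homogeneous element of degree 3 of the differential subalgebra generated by u = x^{δ_1δ_2} − y^{δ_2δ_2} is a k-multiple of u.) -/

import Mathlib

open MvPolynomial

/-- The free commutative monoid of derivative operators on `m` derivations. -/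
abbrev DOp (m : ℕ) := Fin m →₀ ℕ

/-- The differential polynomial algebra `k{x_1,…,x_n}` with `m` commuting derivations:
the polynomial algebra on the variables `x_i^θ`. -/
abbrev DiffPoly (k : Type) [CommRing k] (n m : ℕ) := MvPolynomial (Fin n × DOp m) k

/-- The `i`-th derivation `δ_i` of `k{x_1,…,x_n}`, with `δ_i (x_j^θ) = x_j^{θ δ_i}`. -/
noncomputable def der (k : Type) [CommRing k] (n m : ℕ) (i : Fin m) :
    Derivation k (DiffPoly k n m) (DiffPoly k n m) :=
  MvPolynomial.mkDerivation k fun p => X (p.1, p.2 + Finsupp.single i 1)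

/-- Application of a derivative operator `θ = δ_1^{i_1} ⋯ δ_m^{i_m}`. -/
noncomputable def applyOp {k : Type} [CommRing k] {n m : ℕ} (θ : DOp m)
    (f : DiffPoly k n m) : DiffPoly k n m :=
  Fin.foldr m (fun i g => (⇑(der k n m i))^[θ i] g) f

/-- The differential subalgebra generated by a set: the smallest subalgebra containing it
and closed under all the derivations. -/
noncomputable def diffAdjoin (k : Type) [CommRing k] {n m : ℕ} (S : Set (DiffPoly k n m)) :
    Subalgebra k (DiffPoly k n m) :=
  sInf {T | S ⊆ T ∧ ∀ i : Fin m, ∀ x ∈ T, der k n m i x ∈ T}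

/-- The weight of the variable `x_j^θ`: `1 + |θ|`. -/
def dwt (n m : ℕ) : Fin n × DOp m → ℕ := fun p => 1 + p.2.sum fun _ v => v

/-- The degree of a differential polynomial. -/
noncomputable def ddeg {k : Type} [CommRing k] {n m : ℕ} (f : DiffPoly k n m) : ℕ :=
  weightedTotalDegree (dwt n m) f

/-- The highest homogeneous part of a differential polynomial. -/
noncomputable def dtop {k : Type} [CommRing k] {n m : ℕ} (f : DiffPoly k n m) :
    DiffPoly k n m :=
  weightedHomogeneousComponent (dwt n m) (ddeg f) f

/-- The variable `x` of `k{x,y}`. -/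
noncomputable def xx (k : Type) [CommRing k] (m : ℕ) : DiffPoly k 2 m := X (0, 0)

/-- The variable `y` of `k{x,y}`. -/
noncomputable def yy (k : Type) [CommRing k] (m : ℕ) : DiffPoly k 2 m := X (1, 0)

/-- A differential automorphism: an algebra automorphism commuting with all derivations. -/
def IsDiffAut {k : Type} [CommRing k] {m : ℕ}
    (φ : DiffPoly k 2 m ≃ₐ[k] DiffPoly k 2 m) : Prop :=
  ∀ i x, φ (der k 2 m i x) = der k 2 m i (φ x)

/-- An elementary automorphism: of the form `(a x + f(y), y)` or `(x, b y + g(x))`. -/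
def IsElementary {k : Type} [CommRing k] {m : ℕ}
    (φ : DiffPoly k 2 m ≃ₐ[k] DiffPoly k 2 m) : Prop :=
  IsDiffAut φ ∧
    ((∃ a : k, a ≠ 0 ∧ ∃ f ∈ diffAdjoin k {yy k m},
        φ (xx k m) = C a * xx k m + f ∧ φ (yy k m) = yy k m) ∨
     (∃ b : k, b ≠ 0 ∧ ∃ g ∈ diffAdjoin k {xx k m},
        φ (yy k m) = C b * yy k m + g ∧ φ (xx k m) = xx k m))

/-- A tame automorphism: a composition of elementary automorphisms. -/
def IsTame {k : Type} [CommRing k] {m : ℕ}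
    (φ : DiffPoly k 2 m ≃ₐ[k] DiffPoly k 2 m) : Prop :=
  φ ∈ Subgroup.closure {ψ | IsElementary ψ}

/-- An affine automorphism `(a₁x + b₁y + c₁, a₂x + b₂y + c₂)`. -/
def IsAffine {k : Type} [CommRing k] {m : ℕ}
    (φ : DiffPoly k 2 m ≃ₐ[k] DiffPoly k 2 m) : Prop :=
  IsDiffAut φ ∧ ∃ a₁ b₁ c₁ a₂ b₂ c₂ : k, a₁ * b₂ ≠ a₂ * b₁ ∧
    φ (xx k m) = C a₁ * xx k m + C b₁ * yy k m + C c₁ ∧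
    φ (yy k m) = C a₂ * xx k m + C b₂ * yy k m + C c₂

/-- A triangular automorphism `(a x + f(y), b y + c)`. -/
def IsTriangular {k : Type} [CommRing k] {m : ℕ}
    (φ : DiffPoly k 2 m ≃ₐ[k] DiffPoly k 2 m) : Prop :=
  IsDiffAut φ ∧ ∃ a b c : k, a ≠ 0 ∧ b ≠ 0 ∧ ∃ f ∈ diffAdjoin k {yy k m},
    φ (xx k m) = C a * xx k m + f ∧ φ (yy k m) = C b * yy k m + C c

/-- Membership in `C = Af₂(A) ∩ Tr₂(A)`. -/
def InC {k : Type} [CommRing k] {m : ℕ}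
    (φ : DiffPoly k 2 m ≃ₐ[k] DiffPoly k 2 m) : Prop :=
  IsAffine φ ∧ IsTriangular φ

/-- Membership in the set `A₀ = {id} ∪ {(y, x + a y) : a ∈ k}` of coset representatives. -/
def InA0 {k : Type} [CommRing k] {m : ℕ}
    (φ : DiffPoly k 2 m ≃ₐ[k] DiffPoly k 2 m) : Prop :=
  IsDiffAut φ ∧ (φ = 1 ∨ ∃ a : k,
    φ (xx k m) = yy k m ∧ φ (yy k m) = xx k m + C a * yy k m)

/-- Membership in the set `B₀ = {(x + q(y), y)}`, all homogeneous components of `q` of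
degree at least `2`, of coset representatives. -/
def InB0 {k : Type} [CommRing k] {m : ℕ}
    (φ : DiffPoly k 2 m ≃ₐ[k] DiffPoly k 2 m) : Prop :=
  IsDiffAut φ ∧ ∃ q ∈ diffAdjoin k {yy k m},
    (∀ d : ℕ, d < 2 → weightedHomogeneousComponent (dwt 2 m) d q = 0) ∧
    φ (xx k m) = xx k m + q ∧ φ (yy k m) = yy k m


/-!
Let `w` be weighted homogeneous of degree `d > 0` and let `I` be the ideal spanned by the
monomials of weight `> d`. Since `w * w ∈ I`, the polynomials congruent modulo `I` to some
`c + a w` form a subalgebra, and since each derivation raises weights by one it maps this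
subalgebra into `I`. So the subalgebra contains the differential subalgebra generated by `w`,
whose elements of degree `d` are therefore multiples of `w`. For `d = 3` this applies to
both `u` and `v`, and neither is a multiple of the other: compare the coefficients of
`x^{δ₁δ₁}` and `x^{δ₁δ₂}`.
-/

open Finsupp

theorem Finsupp.weight_mono {σ : Type*} (ω : σ → ℕ) :
    Monotone fun s : σ →₀ ℕ => weight ω s := fun s t hst => by
  obtain ⟨u, rfl⟩ := exists_add_of_le hst
  simp

namespace MvPolynomial

section Weights

variable {σ R : Type*} [CommSemiring R] (ω : σ → ℕ)

noncomputable def weightGtIdeal (d : ℕ) : Ideal (MvPolynomial σ R) :=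
  restrictSupportIdeal R {s | d < weight ω s} fun _ _ hst hs => hs.trans_le (weight_mono ω hst)

variable {ω}

theorem mem_weightGtIdeal {d : ℕ} {φ : MvPolynomial σ R} :
    φ ∈ weightGtIdeal ω d ↔ ∀ s ∈ φ.support, d < weight ω s :=
  Iff.rfl

theorem IsWeightedHomogeneous.mem_weightGtIdeal_of_lt {d e : ℕ} {φ : MvPolynomial σ R}
    (hφ : IsWeightedHomogeneous ω φ e) (hde : d < e) : φ ∈ weightGtIdeal ω d :=
  mem_weightGtIdeal.mpr fun _ hs => (hφ (mem_support_iff.mp hs)).symm ▸ hde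

theorem weightedHomogeneousComponent_eq_zero_of_mem_weightGtIdeal {d : ℕ}
    {φ : MvPolynomial σ R} (hφ : φ ∈ weightGtIdeal ω d) :
    weightedHomogeneousComponent ω d φ = 0 := by
  classical
  ext s
  rw [coeff_weightedHomogeneousComponent, coeff_zero]
  split_ifs with hs
  · by_contra h
    exact (mem_weightGtIdeal.mp hφ s (mem_support_iff.mpr h)).ne' hs
  · rfl

theorem IsWeightedHomogeneous.mkDerivation {c d : ℕ} {f : σ → MvPolynomial σ R}
    (hf : ∀ i, IsWeightedHomogeneous ω (f i) (ω i + c)) {φ : MvPolynomial σ R}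
    (hφ : IsWeightedHomogeneous ω φ d) :
    IsWeightedHomogeneous ω (MvPolynomial.mkDerivation R f φ) (d + c) := by
  rw [← mem_weightedHomogeneousSubmodule, weightedHomogeneousSubmodule_eq_finsupp_supported,
    AddMonoidAlgebra.supported_eq_span_single] at hφ
  refine Submodule.span_induction ?_ ?_ (fun p q _ _ hp hq ↦ ?_) (fun r p _ h ↦ ?_) hφ
  · rintro _ ⟨s, hs, rfl⟩
    simp only [single_eq_monomial]
    rw [mkDerivation_monomial, one_smul]
    refine Submodule.sum_mem (weightedHomogeneousSubmodule R ω (d + c)) fun i hi => ?_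
    have hi : s i ≠ 0 := Finsupp.mem_support_iff.mp hi
    dsimp only
    rw [smul_eq_mul, mem_weightedHomogeneousSubmodule, ← hs, ← weight_sub_single_add hi,
      add_assoc]
    exact (isWeightedHomogeneous_monomial _ _ _ rfl).mul (hf i)
  · rw [map_zero]; exact isWeightedHomogeneous_zero _ _ _
  · rw [map_add]; exact hp.add hq
  · rw [(MvPolynomial.mkDerivation R f).map_smul]
    exact (weightedHomogeneousSubmodule R ω (d + c)).smul_mem r h

theorem mkDerivation_mem_weightGtIdeal {c d : ℕ} {f : σ → MvPolynomial σ R}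
    (hf : ∀ i, IsWeightedHomogeneous ω (f i) (ω i + c)) {φ : MvPolynomial σ R}
    (hφ : φ ∈ weightGtIdeal ω d) : mkDerivation R f φ ∈ weightGtIdeal ω d := by
  rw [φ.as_sum, map_sum]
  refine Ideal.sum_mem _ fun s hs => ?_
  exact ((isWeightedHomogeneous_monomial ω s _ rfl).mkDerivation hf).mem_weightGtIdeal_of_lt
    ((mem_weightGtIdeal.mp hφ s hs).trans_le le_self_add)

end Weights

section Truncation

variable {σ R : Type*} [CommRing R] {ω : σ → ℕ} {d : ℕ} {w : MvPolynomial σ R}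

noncomputable def spanOneSelfModWeightGt (ω : σ → ℕ) (d : ℕ) (w : MvPolynomial σ R)
    (hw : w * w ∈ weightGtIdeal ω d) : Subalgebra R (MvPolynomial σ R) where
  carrier := {φ | ∃ c a : R, φ - (C c + C a * w) ∈ weightGtIdeal ω d}
  mul_mem' := by
    rintro φ ψ ⟨c, a, hφ⟩ ⟨c', a', hψ⟩
    refine ⟨c * c', c * a' + a * c', ?_⟩
    have : φ * ψ - (C (c * c') + C (c * a' + a * c') * w) =
        (φ - (C c + C a * w)) * ψ + (C c + C a * w) * (ψ - (C c' + C a' * w)) +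
          C (a * a') * (w * w) := by
      simp only [map_mul, map_add]; ring
    rw [this]
    exact add_mem (add_mem (Ideal.mul_mem_right _ _ hφ) (Ideal.mul_mem_left _ _ hψ))
      (Ideal.mul_mem_left _ _ hw)
  add_mem' := by
    rintro φ ψ ⟨c, a, hφ⟩ ⟨c', a', hψ⟩
    refine ⟨c + c', a + a', ?_⟩
    convert add_mem hφ hψ using 1
    simp only [map_add]; ring
  algebraMap_mem' r := ⟨r, 0, by simp [algebraMap_eq]⟩

variable {hw : w * w ∈ weightGtIdeal ω d}

theorem self_mem_spanOneSelfModWeightGt : w ∈ spanOneSelfModWeightGt ω d w hw :=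
  ⟨0, 1, by simp⟩

theorem mem_spanOneSelfModWeightGt_of_mem_weightGtIdeal {φ : MvPolynomial σ R}
    (hφ : φ ∈ weightGtIdeal ω d) : φ ∈ spanOneSelfModWeightGt ω d w hw :=
  ⟨0, 0, by simpa using hφ⟩

theorem exists_eq_C_mul_of_mem_spanOneSelfModWeightGt (hd : d ≠ 0)
    (hwd : IsWeightedHomogeneous ω w d) {φ : MvPolynomial σ R}
    (hφ : φ ∈ spanOneSelfModWeightGt ω d w hw) (hφd : IsWeightedHomogeneous ω φ d) :
    ∃ a : R, φ = C a * w := by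
  obtain ⟨c, a, hφ⟩ := hφ
  refine ⟨a, ?_⟩
  have h := weightedHomogeneousComponent_eq_zero_of_mem_weightGtIdeal hφ
  rwa [map_sub, map_add, hφd.weightedHomogeneousComponent_same,
    (isWeightedHomogeneous_C ω c).weightedHomogeneousComponent_ne d hd,
    weightedHomogeneousComponent_C_mul, hwd.weightedHomogeneousComponent_same, zero_add,
    sub_eq_zero] at h

end Truncation

theorem X_sub_X_ne_C_mul_X_sub_X {σ R : Type*} [CommRing R] [Nontrivial R]
    {p q p' q' : σ} (hq : q ≠ p) (hp' : p' ≠ p) (hq' : q' ≠ p) (a : R) :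
    (X p - X q : MvPolynomial σ R) ≠ C a * (X p' - X q') := by
  classical
  intro h
  have := congrArg (coeff (single p 1)) h
  simp [coeff_X, single_left_inj, hq, hp', hq'] at this

end MvPolynomial

section DiffPoly

variable {k : Type} [CommRing k] {n m : ℕ}

theorem der_X (i : Fin m) (p : Fin n × DOp m) :
    der k n m i (X p) = X (p.1, p.2 + single i 1) :=
  mkDerivation_X _ _ _

theorem dwt_add_single (p : Fin n × DOp m) (i : Fin m) :
    dwt n m (p.1, p.2 + single i 1) = dwt n m p + 1 := by
  simp only [dwt]
  rw [sum_add_index' (fun _ => rfl) (fun _ _ _ => rfl), sum_single_index rfl]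
  omega

theorem isWeightedHomogeneous_der (i : Fin m) {f : DiffPoly k n m} {d : ℕ}
    (hf : IsWeightedHomogeneous (dwt n m) f d) :
    IsWeightedHomogeneous (dwt n m) (der k n m i f) (d + 1) :=
  hf.mkDerivation fun p => dwt_add_single p i ▸ isWeightedHomogeneous_X k (dwt n m) _

theorem der_mem_weightGtIdeal (i : Fin m) {d : ℕ} {f : DiffPoly k n m}
    (hf : f ∈ weightGtIdeal (dwt n m) d) : der k n m i f ∈ weightGtIdeal (dwt n m) d :=
  mkDerivation_mem_weightGtIdeal
    (fun p => dwt_add_single p i ▸ isWeightedHomogeneous_X k (dwt n m) _) hf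

theorem diffAdjoin_singleton_le_spanOneSelfModWeightGt {d : ℕ} {w : DiffPoly k n m}
    (hwd : IsWeightedHomogeneous (dwt n m) w d) (hw : w * w ∈ weightGtIdeal (dwt n m) d) :
    diffAdjoin k {w} ≤ spanOneSelfModWeightGt (dwt n m) d w hw := by
  refine sInf_le ⟨Set.singleton_subset_iff.mpr self_mem_spanOneSelfModWeightGt, ?_⟩
  rintro i f ⟨c, a, hf⟩
  refine mem_spanOneSelfModWeightGt_of_mem_weightGtIdeal ?_
  have hder : der k n m i f =
      der k n m i (f - (C c + C a * w)) + C a * der k n m i w := by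
    simp [Derivation.leibniz, derivation_C]
  rw [hder]
  exact add_mem (der_mem_weightGtIdeal i hf)
    (Ideal.mul_mem_left _ _
      ((isWeightedHomogeneous_der i hwd).mem_weightGtIdeal_of_lt d.lt_succ_self))

theorem exists_eq_C_mul_of_mem_diffAdjoin_singleton {d : ℕ} (hd : d ≠ 0) {w : DiffPoly k n m}
    (hwd : IsWeightedHomogeneous (dwt n m) w d) {f : DiffPoly k n m}
    (hf : f ∈ diffAdjoin k {w}) (hfd : IsWeightedHomogeneous (dwt n m) f d) :
    ∃ a : k, f = C a * w :=
  have hw : w * w ∈ weightGtIdeal (dwt n m) d := (hwd.mul hwd).mem_weightGtIdeal_of_lt (by omega)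
  exists_eq_C_mul_of_mem_spanOneSelfModWeightGt hd hwd
    (diffAdjoin_singleton_le_spanOneSelfModWeightGt hwd hw hf) hfd

end DiffPoly

theorem isWeightedHomogeneous_der_der_xx_sub_der_der_yy {k : Type} [CommRing k] {m : ℕ}
    (i j i' j' : Fin m) :
    IsWeightedHomogeneous (dwt 2 m)
      (der k 2 m i (der k 2 m j (xx k m)) - der k 2 m i' (der k 2 m j' (yy k m))) 3 := by
  have hX (l : Fin 2) : IsWeightedHomogeneous (dwt 2 m) (X (l, 0) : DiffPoly k 2 m) 1 := by
    simpa [dwt] using isWeightedHomogeneous_X k (dwt 2 m) (l, 0)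
  rw [← mem_weightedHomogeneousSubmodule]
  exact sub_mem (isWeightedHomogeneous_der i (isWeightedHomogeneous_der j (hX 0)))
    (isWeightedHomogeneous_der i' (isWeightedHomogeneous_der j' (hX 1)))

/-- The element `x^{δ₁δ₁} - y^{δ₁δ₂}` is not in the differential subalgebra generated by
`u = x^{δ₁δ₂} - y^{δ₂δ₂}`, and symmetrically; moreover every homogeneous element of
degree `3` of the differential subalgebra generated by `u` is a `k`-multiple of `u`. -/
theorem stmt16 {k : Type} [Field k] {m : ℕ} (hm : 2 ≤ m) :
    let i1 : Fin m := ⟨0, by omega⟩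
    let i2 : Fin m := ⟨1, by omega⟩
    let u : DiffPoly k 2 m :=
      der k 2 m i2 (der k 2 m i1 (xx k m)) - der k 2 m i2 (der k 2 m i2 (yy k m))
    let v : DiffPoly k 2 m :=
      der k 2 m i1 (der k 2 m i1 (xx k m)) - der k 2 m i1 (der k 2 m i2 (yy k m))
    v ∉ diffAdjoin k {u} ∧ u ∉ diffAdjoin k {v} ∧
      ∀ h ∈ diffAdjoin k {u}, IsWeightedHomogeneous (dwt 2 m) h 3 →
        ∃ a : k, h = C a * u := by
  intro i1 i2 u v
  have hi : i1 ≠ i2 := by simp [i1, i2, Fin.ext_iff]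
  have hu := isWeightedHomogeneous_der_der_xx_sub_der_der_yy (k := k) i2 i1 i2 i2
  have hv := isWeightedHomogeneous_der_der_xx_sub_der_der_yy (k := k) i1 i1 i1 i2
  refine ⟨fun hvu => ?_, fun huv => ?_,
    fun _ hf hfd => exists_eq_C_mul_of_mem_diffAdjoin_singleton three_ne_zero hu hf hfd⟩
  · obtain ⟨a, ha⟩ := exists_eq_C_mul_of_mem_diffAdjoin_singleton three_ne_zero hu hvu hv
    simp only [v, xx, yy, der_X] at ha
    exact X_sub_X_ne_C_mul_X_sub_X (by simp) (by simp [single_left_inj one_ne_zero, hi.symm])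
      (by simp) a ha
  · obtain ⟨a, ha⟩ := exists_eq_C_mul_of_mem_diffAdjoin_singleton three_ne_zero hv huv hu
    simp only [u, xx, yy, der_X] at ha
    exact X_sub_X_ne_C_mul_X_sub_X (by simp) (by simp [single_left_inj one_ne_zero, hi])
      (by simp) a ha
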